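/- Let (X,f), α, Γ, and P (satisfying Assumptions (A)–(D)) be as in the tile-graph random-walk setup. Then for each vertex v ∈ Γ, the set A_{𝕆(v)} = ∪_{u ∈ 𝕆(v)} A_u is an open subset of X. -/

import Mathlib

open Metric Set Filter Topology MeasureTheory
open scoped ENNReal

namespace TilePaper

variable {X : Type*} [MetricSpace X]

/-- The Assumptions in Subsection 2.1: `f` is a continuous, open, topologically transitive,
distance-expanding map (with expansion constants `xi` and `lam`), injective on `xi`-balls. -/
structure ExpandingSystem (f : X → X) (xi lam : ℝ) : Prop where
  continuous : Continuous f
  isOpenMap : IsOpenMap f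
  transitive : ∀ U V : Set X, IsOpen U → IsOpen V → U.Nonempty → V.Nonempty →
      ∃ n : ℕ, ((f^[n]) '' U ∩ V).Nonempty
  xi_pos : 0 < xi
  one_lt_lam : 1 < lam
  expand : ∀ x y : X, dist x y ≤ xi → lam * dist x y ≤ dist (f x) (f y)
  injOn : ∀ x : X, Set.InjOn f (Metric.ball x xi)

/-- A Markov partition `A : Fin N → Set X` for `(X, f)` with mesh smaller than `xi`. -/
structure MarkovPartition (f : X → X) {N : ℕ} (A : Fin N → Set X) (xi : ℝ) : Prop where
  cover : ⋃ i, A i = Set.univ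
  regClosed : ∀ i, A i = closure (interior (A i))
  disjointInt : ∀ i j, i ≠ j → interior (A i) ∩ interior (A j) = ∅
  markov : ∀ i j, (f '' interior (A i) ∩ interior (A j)).Nonempty →
      interior (A j) ⊆ f '' interior (A i)
  mesh_lt : ∀ i, Metric.diam (A i) < xi

variable {N : ℕ}

/-- The tile `A_u` associated with a word `u`. -/
def tile (f : X → X) (A : Fin N → Set X) : List (Fin N) → Set X
  | [] => Set.univ
  | i :: u => A i ∩ f ⁻¹' tile f A u

/-- A word `u = u₁ … uₙ` is admissible if `A_{u_{i+1}} ⊆ f(A_{u_i})` for all `i`. -/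
def Admissible (f : X → X) (A : Fin N → Set X) (u : List (Fin N)) : Prop :=
  u.Chain' fun a b => A b ⊆ f '' A a

/-- Vertices of the tile graph: admissible words. -/
def Vertex (f : X → X) (A : Fin N → Set X) : Type _ :=
  {u : List (Fin N) // Admissible f A u}

variable (f : X → X) (A : Fin N → Set X)

instance : Countable (Vertex f A) :=
  show Countable {u : List (Fin N) // Admissible f A u} from inferInstance

instance : MeasurableSpace (Vertex f A) := ⊤

/-- The basepoint `o`: the empty word. -/
def basepoint : Vertex f A := ⟨[], List.IsChain.nil⟩

/-- The level `|u|` of a vertex: the length of the word. -/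
def level (u : Vertex f A) : ℕ := u.1.length

/-- The tile graph: `u ~ v` iff `u ≠ v`, the levels differ at most by one, and the
corresponding tiles intersect. -/
def tileGraph : SimpleGraph (Vertex f A) where
  Adj u v := u ≠ v ∧ |(level f A u : ℤ) - (level f A v : ℤ)| ≤ 1 ∧
    (tile f A u.1 ∩ tile f A v.1).Nonempty
  symm := ⟨by
    rintro u v ⟨h1, h2, h3⟩
    exact ⟨h1.symm, by rwa [abs_sub_comm], by rwa [Set.inter_comm]⟩⟩
  loopless := ⟨fun u h => h.1 rfl⟩

/-- The combinatorial graph distance on the tile graph. -/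
noncomputable def gdist (u v : Vertex f A) : ℕ := (tileGraph f A).dist u v

/-- The Gromov product of `u, v` with respect to `w`. -/
noncomputable def gprodAt (w u v : Vertex f A) : ℝ :=
  ((gdist f A u w : ℝ) + (gdist f A v w : ℝ) - (gdist f A u v : ℝ)) / 2

/-- The Gromov product of `u, v` with respect to the basepoint `o`. -/
noncomputable def gprod (u v : Vertex f A) : ℝ :=
  gprodAt f A (basepoint f A) u v

/-- The shift map `σ` on the tile graph (deleting the first letter). -/
def shift (u : Vertex f A) : Vertex f A := ⟨u.1.tail, u.2.tail⟩

/-- The metric `ρ` of `X` is an `a`-visual metric: under the natural identification of `X` with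
the Gromov boundary of the tile graph, `dist x y ≍ exp (-a ⟨x,y⟩_o)`, where the extended Gromov
product of two boundary points is, up to a uniform additive constant, the supremum of the Gromov
products of pairs of vertices whose tiles contain the two points. -/
def IsVisualMetric (a : ℝ) : Prop :=
  ∃ C : ℝ, 1 ≤ C ∧
    (∀ (u v : Vertex f A) (x y : X), x ∈ tile f A u.1 → y ∈ tile f A v.1 →
      dist x y ≤ C * Real.exp (-a * gprod f A u v)) ∧
    (∀ x y : X, x ≠ y → ∃ u v : Vertex f A, x ∈ tile f A u.1 ∧ y ∈ tile f A v.1 ∧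
      Real.exp (-a * gprod f A u v) ≤ C * dist x y)

section Walk

variable (P : Vertex f A → Measure (Vertex f A))

/-- Assumptions (A)–(D) on the transition probability `P` with locality constant `R`. -/
structure WalkAssumptions (R : ℕ) : Prop where
  prob : ∀ u, IsProbabilityMeasure (P u)
  locA : ∀ x y : Vertex f A, P x {y} ≠ 0 → gdist f A x y < R
  levelB : ∀ x y : Vertex f A, P x {y} ≠ 0 → level f A x < level f A y
  posC : ∀ x y : Vertex f A, level f A y = level f A x + 1 → gdist f A x y = 1 → P x {y} ≠ 0
  shiftD : ∀ u : Vertex f A, u ≠ basepoint f A →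
      P (shift f A u) = Measure.map (shift f A) (P u)

open scoped Classical in
/-- The `n`-step transition probabilities. -/
noncomputable def pstep : ℕ → Vertex f A → Vertex f A → ℝ≥0∞
  | 0, x, y => if x = y then 1 else 0
  | n + 1, x, y => ∑' z : Vertex f A, P x {z} * pstep n z y

/-- The Green function `G(x,y) = ∑ₙ p⁽ⁿ⁾(x,y)`; under Assumption (B) it coincides with the
hitting probability `F(x,y)`. -/
noncomputable def greenFn (x y : Vertex f A) : ℝ≥0∞ := ∑' n : ℕ, pstep f A P n x y

/-- The shadow `𝕆(u) = {v : F(u,v) > 0}`. -/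
def shadow (u : Vertex f A) : Set (Vertex f A) := {v | greenFn f A P u v ≠ 0}

/-- The neighborhood `N(u)` of `u` associated with the random walk. -/
def nbhdW (R : ℕ) (u : Vertex f A) : Set (Vertex f A) :=
  {v | (shadow f A P u ∩ shadow f A P v).Nonempty ∧
    |(level f A u : ℤ) - (level f A v : ℤ)| ≤ (R : ℤ)}

/-- The Martin kernel `K(·, v) = F(·,v)/F(o,v)` as a real-valued function on the graph. -/
noncomputable def martinKer (v : Vertex f A) : Vertex f A → ℝ := fun u =>
  (greenFn f A P u v / greenFn f A P (basepoint f A) v).toReal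

/-- The Martin boundary: the closure of the family of Martin kernels in the topology of
pointwise convergence, minus the family itself. -/
noncomputable def martinBoundary : Set (Vertex f A → ℝ) :=
  closure (Set.range (martinKer f A P)) \ Set.range (martinKer f A P)

open scoped Classical in
/-- `μ` is the law of the random walk with transition probability `P` started at `start`:
a probability measure on the sample-path space with the prescribed cylinder probabilities. -/
def IsWalkLawFrom (start : Vertex f A) (μ : Measure (ℕ → Vertex f A)) : Prop :=
  IsProbabilityMeasure μ ∧
  ∀ (n : ℕ) (u : ℕ → Vertex f A),
    μ {ω | ∀ i ≤ n, ω i = u i} =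
      (if u 0 = start then 1 else 0) * ∏ i ∈ Finset.range n, P (u i) {u (i + 1)}

/-- `μ` is the law of the random walk started at the basepoint `o`. -/
def IsWalkLaw (μ : Measure (ℕ → Vertex f A)) : Prop :=
  IsWalkLawFrom f A P (basepoint f A) μ

/-- `Φ` is the natural continuous surjection from the Martin boundary to `X` (identified with
the Gromov boundary of the tile graph) extending the identity on `Γ`: it is continuous on the
Martin boundary, onto `X`, and sends each Martin boundary point `ξ` to the limit in `X` of any
sequence of vertices converging to `ξ`, in the sense that the corresponding tiles converge to
the singleton `{Φ ξ}`. -/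
def NaturalSurjection (Φ : (Vertex f A → ℝ) → X) : Prop :=
  ContinuousOn Φ (martinBoundary f A P) ∧
  Φ '' martinBoundary f A P = Set.univ ∧
  ∀ ξ ∈ martinBoundary f A P, ∀ s : ℕ → Vertex f A,
    Tendsto (fun n => martinKer f A P (s n)) atTop (𝓝 ξ) →
    ∀ ε : ℝ, 0 < ε → ∃ M : ℕ, ∀ n ≥ M, tile f A (s n).1 ⊆ Metric.ball (Φ ξ) ε

/-- `Zinf` assigns to almost every sample path its limit point in the Martin boundary. -/
def ZinfSpec (μ : Measure (ℕ → Vertex f A)) (Zinf : (ℕ → Vertex f A) → (Vertex f A → ℝ)) :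
    Prop :=
  ∀ᵐ ω ∂μ, Zinf ω ∈ martinBoundary f A P ∧
    Tendsto (fun n => martinKer f A P (ω n)) atTop (𝓝 (Zinf ω))

end Walk


section AuxProof

variable {f : X → X} {A : Fin N → Set X} {xi lam : ℝ}

lemma A_isClosed (hMP : MarkovPartition f A xi) (i : Fin N) : IsClosed (A i) := by
  rw [hMP.regClosed i]; exact isClosed_closure

lemma tile_isClosed (hf : Continuous f) (hMP : MarkovPartition f A xi) :
    ∀ w : List (Fin N), IsClosed (tile f A w)
  | [] => isClosed_univ
  | i :: u => (A_isClosed hMP i).inter ((tile_isClosed hf hMP u).preimage hf)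

lemma markov_closure [CompactSpace X] (hf : Continuous f) (hMP : MarkovPartition f A xi)
    {i j : Fin N} (h : interior (A j) ⊆ f '' interior (A i)) : A j ⊆ f '' A i := by
  have hclosed : IsClosed (f '' A i) :=
    (((A_isClosed hMP i).isCompact).image hf).isClosed
  calc A j = closure (interior (A j)) := hMP.regClosed j
    _ ⊆ closure (f '' interior (A i)) := closure_mono h
    _ ⊆ closure (f '' A i) := closure_mono (Set.image_mono interior_subset)
    _ = f '' A i := hclosed.closure_eq

/-- Points whose first `m` iterates lie in interiors of partition elements admit an
admissible word of length `m` whose tile contains them. -/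
lemma exists_word [CompactSpace X] (hf : Continuous f) (hMP : MarkovPartition f A xi) :
    ∀ (m : ℕ) (x : X), (∀ k < m, f^[k] x ∈ ⋃ i, interior (A i)) →
      ∃ w : List (Fin N), w.length = m ∧ Admissible f A w ∧ x ∈ tile f A w ∧
        (∀ i ∈ w.head?, x ∈ interior (A i))
  | 0, x, _ => ⟨[], rfl, List.isChain_nil, Set.mem_univ x, by simp⟩
  | m + 1, x, hx => by
    obtain ⟨i, hi⟩ := Set.mem_iUnion.mp (hx 0 (Nat.succ_pos m))
    obtain ⟨w, hlen, hadm, htile, hhead⟩ := exists_word hf hMP m (f x) (fun k hk => by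
      have := hx (k + 1) (Nat.succ_lt_succ hk)
      rwa [Function.iterate_succ_apply] at this)
    have hi' : x ∈ interior (A i) := hi
    refine ⟨i :: w, by simp [hlen], ?_, ⟨interior_subset hi', htile⟩, by simpa using hi'⟩
    rcases w with _ | ⟨j, w'⟩
    · exact List.isChain_singleton i
    · have hj : f x ∈ interior (A j) := hhead j rfl
      have hfx : f x ∈ f '' interior (A i) := ⟨x, hi', rfl⟩
      have hsub : interior (A j) ⊆ f '' interior (A i) :=
        hMP.markov i j ⟨f x, hfx, hj⟩
      exact List.IsChain.cons_cons (markov_closure hf hMP hsub) hadm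

lemma dense_good [CompactSpace X] (hES : ExpandingSystem f xi lam)
    (hMP : MarkovPartition f A xi) (m : ℕ) :
    Dense (⋂ k ∈ Finset.range m, f^[k] ⁻¹' (⋃ i, interior (A i))) := by
  have hopen : IsOpen (⋃ i, interior (A i)) := isOpen_iUnion fun i => isOpen_interior
  have hdense : Dense (⋃ i, interior (A i)) := by
    rw [dense_iff_closure_eq, ← Set.univ_subset_iff, ← hMP.cover]
    exact Set.iUnion_subset fun i =>
      (hMP.regClosed i).le.trans (closure_mono (Set.subset_iUnion (fun i => interior (A i)) i))
  induction m with
  | zero => simp [dense_univ]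
  | succ n ih =>
    rw [Finset.range_add_one]
    have hiter : IsOpenMap f^[n] := by
      clear ih
      induction n with
      | zero => exact IsOpenMap.id
      | succ k ihk =>
        rw [Function.iterate_succ']
        exact hES.isOpenMap.comp ihk
    have hpre : Dense (f^[n] ⁻¹' (⋃ i, interior (A i))) := hdense.preimage hiter
    have hopenpre : IsOpen (f^[n] ⁻¹' (⋃ i, interior (A i))) :=
      hopen.preimage (hES.continuous.iterate n)
    simp only [Finset.set_biInter_insert]
    exact hpre.inter_of_isOpen_left (by simpa using ih) hopenpre

/-- Every point of `X` lies in the tile of some admissible word of each length. -/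
lemma cover_level [CompactSpace X] (hES : ExpandingSystem f xi lam)
    (hMP : MarkovPartition f A xi) (m : ℕ) (x : X) :
    ∃ w : List (Fin N), w.length = m ∧ Admissible f A w ∧ x ∈ tile f A w := by
  set T : Set X := ⋃ w ∈ {w : List (Fin N) | w.length = m ∧ Admissible f A w}, tile f A w
    with hT
  have hfin : {w : List (Fin N) | w.length = m ∧ Admissible f A w}.Finite :=
    (List.finite_length_eq (Fin N) m).subset fun w hw => hw.1
  have hclosed : IsClosed T :=
    hfin.isClosed_biUnion fun w _ => tile_isClosed hES.continuous hMP w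
  have hdense : Dense T := by
    refine Dense.mono ?_ (dense_good hES hMP m)
    intro y hy
    simp only [Set.mem_iInter, Finset.mem_range] at hy
    obtain ⟨w, hlen, hadm, htile, -⟩ := exists_word hES.continuous hMP m y (fun k hk => hy k hk)
    exact Set.mem_biUnion ⟨hlen, hadm⟩ htile
  have hTuniv : T = Set.univ := by
    rw [← hclosed.closure_eq, ← Set.univ_subset_iff, ← hdense.closure_eq]
  have hx : x ∈ T := hTuniv ▸ Set.mem_univ x
  obtain ⟨w, hw, hxt⟩ := Set.mem_iUnion₂.mp hx
  exact ⟨w, hw.1, hw.2, hxt⟩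

lemma pstep_one (P : Vertex f A → Measure (Vertex f A)) (u w : Vertex f A) :
    pstep f A P 1 u w = P u {w} := by
  classical
  show (∑' z : Vertex f A, P u {z} * pstep f A P 0 z w) = P u {w}
  rw [tsum_eq_single w]
  · simp [pstep]
  · intro z hz
    simp [pstep, hz]

lemma pstep_mul_le (P : Vertex f A → Measure (Vertex f A)) (u w : Vertex f A) (m : ℕ) :
    ∀ (n : ℕ) (v : Vertex f A),
      pstep f A P n v u * pstep f A P m u w ≤ pstep f A P (n + m) v w
  | 0, v => by
    classical
    by_cases h : v = u
    · subst h; simp [pstep]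
    · simp [pstep, h]
  | n + 1, v => by
    have hnm : n + 1 + m = (n + m) + 1 := by omega
    rw [hnm]
    show (∑' z : Vertex f A, P v {z} * pstep f A P n z u) * pstep f A P m u w ≤
      ∑' z : Vertex f A, P v {z} * pstep f A P (n + m) z w
    rw [← ENNReal.tsum_mul_right]
    refine ENNReal.tsum_le_tsum fun z => ?_
    rw [mul_assoc]
    exact mul_le_mul_right (pstep_mul_le P u w m n z) _

lemma greenFn_trans (P : Vertex f A → Measure (Vertex f A)) (v u w : Vertex f A)
    (h1 : greenFn f A P v u ≠ 0) (h2 : greenFn f A P u w ≠ 0) :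
    greenFn f A P v w ≠ 0 := by
  rw [greenFn, Ne, ENNReal.tsum_eq_zero] at h1 h2 ⊢
  push_neg at h1 h2 ⊢
  obtain ⟨n, hn⟩ := h1
  obtain ⟨m, hm⟩ := h2
  refine ⟨n + m, fun h0 => ?_⟩
  have hle := pstep_mul_le P u w m n v
  rw [h0, le_zero_iff] at hle
  exact (mul_ne_zero hn hm) hle

lemma shadow_step {R : ℕ} (P : Vertex f A → Measure (Vertex f A))
    (hP : WalkAssumptions f A P R) {u w : Vertex f A}
    (hlev : level f A w = level f A u + 1)
    (hmeet : (tile f A u.1 ∩ tile f A w.1).Nonempty) :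
    greenFn f A P u w ≠ 0 := by
  have hne : u ≠ w := fun h => by rw [h] at hlev; omega
  have habs : |(level f A u : ℤ) - (level f A w : ℤ)| ≤ 1 := by
    have h1 : (level f A u : ℤ) - (level f A w : ℤ) = -1 := by
      rw [hlev]; push_cast; ring
    rw [h1]
    norm_num
  have hadj : (tileGraph f A).Adj u w := by show u ≠ w ∧ _ ∧ _; exact ⟨hne, habs, hmeet⟩
  have hdist : gdist f A u w = 1 :=
    (SimpleGraph.dist_eq_one_iff_adj).mpr hadj
  have hpos := hP.posC u w hlev hdist
  intro h0
  rw [greenFn, ENNReal.tsum_eq_zero] at h0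
  exact hpos (by rw [← pstep_one P u w]; exact h0 1)

end AuxProof

/-- Under Assumptions (A)–(D), for each vertex `v` of the tile graph the
shadow set `A_{𝕆(v)} = ⋃_{u ∈ 𝕆(v)} A_u` is open in `X`. -/
theorem stmt12 {X : Type*} [MetricSpace X] [CompactSpace X] {f : X → X} {xi lam : ℝ}
    (hES : ExpandingSystem f xi lam) {N : ℕ} {A : Fin N → Set X}
    (hMP : MarkovPartition f A xi) (P : Vertex f A → Measure (Vertex f A)) (R : ℕ)
    (hR : 0 < R) (hP : WalkAssumptions f A P R) :
    ∀ v : Vertex f A, IsOpen (⋃ u ∈ shadow f A P v, tile f A u.1) := by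
  intro v
  rw [Metric.isOpen_iff]
  intro x hx
  obtain ⟨u, hu, hxu⟩ := Set.mem_iUnion₂.mp hx
  set m := level f A u + 1 with hm
  set S : Set (Vertex f A) := {w : Vertex f A | level f A w = m ∧ x ∉ tile f A w.1} with hS
  have hfinV : {w : Vertex f A | level f A w = m}.Finite := by
    have hfl : Set.Finite {l : List (Fin N) | l.length = m} := List.finite_length_eq (Fin N) m
    exact Set.Finite.preimage (Set.injOn_of_injective Subtype.val_injective) hfl
  have hC : IsClosed (⋃ w ∈ S, tile f A w.1) :=
    (hfinV.subset fun w hw => hw.1).isClosed_biUnion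
      fun w _ => tile_isClosed hES.continuous hMP w.1
  have hxC : x ∈ (⋃ w ∈ S, tile f A w.1)ᶜ := by
    intro hmem
    obtain ⟨w, hwS, hxw⟩ := Set.mem_iUnion₂.mp hmem
    exact hwS.2 hxw
  obtain ⟨ε, hε, hball⟩ := Metric.isOpen_iff.mp hC.isOpen_compl x hxC
  refine ⟨ε, hε, fun y hy => ?_⟩
  obtain ⟨w, hwlen, hwadm, hyw⟩ := cover_level hES hMP m y
  set wv : Vertex f A := ⟨w, hwadm⟩ with hwv
  have hxw : x ∈ tile f A w := by
    by_contra hxw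
    exact (hball hy) (Set.mem_biUnion (show wv ∈ S from ⟨hwlen, hxw⟩) hyw)
  have h1 : greenFn f A P u wv ≠ 0 :=
    shadow_step P hP (show w.length = level f A u + 1 from hwlen) ⟨x, hxu, hxw⟩
  have h2 : greenFn f A P v wv ≠ 0 := greenFn_trans P v u wv hu h1
  exact Set.mem_biUnion h2 hyw


end TilePaper
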